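/- arXiv:0908.1200 — 2 statements merged into one kernel-verified Lean document; each statement's English description precedes it below -/
import Mathlib

section
/- For λ² t → τ with λ → 0, t → ∞: if the correlation function φ(s) = ⟨H_I(0) H_I(s)⟩ is integrable on ℝ and time-translation invariant, then the rescaled second-order perturbation term −λ² ∫_0^t ∫_0^{t₁} φ(t₂ − t₁) dt₂ dt₁ converges to −τ ∫_{−∞}^0 φ(s) ds. -/
open MeasureTheory Filter intervalIntegral

/-- Rescaled second-order perturbation term in the weak-coupling (van Hove) limit:
if `φ` is integrable, then
`-λ² ∫_0^{τ/λ²} ∫_0^{t₁} φ(t₂ - t₁) dt₂ dt₁ → -τ ∫_{-∞}^0 φ(s) ds` as `λ → 0⁺`. -/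
theorem van_hove_second_order_limit
    (φ : ℝ → ℂ) (hφ : Integrable φ) (τ : ℝ) (hτ : 0 < τ) :
    Tendsto
      (fun lam : ℝ =>
        -((lam ^ 2 : ℂ) *
          ∫ t₁ in (0 : ℝ)..(τ / lam ^ 2), ∫ t₂ in (0 : ℝ)..t₁, φ (t₂ - t₁)))
      (nhdsWithin 0 (Set.Ioi 0))
      (nhds (-((τ : ℂ) * ∫ s in Set.Iic (0 : ℝ), φ s))) := by
  set L : ℂ := ∫ s in Set.Iic (0 : ℝ), φ s with hL
  -- the primitive F t = ∫ x in (-t)..0, φ x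
  set F : ℝ → ℂ := fun t => ∫ x in (-t)..(0 : ℝ), φ x with hF
  have hFcont : Continuous F := by
    have h1 : Continuous fun t : ℝ => ∫ x in (0 : ℝ)..t, φ x :=
      intervalIntegral.continuous_primitive (fun a b => hφ.intervalIntegrable) 0
    have : F = fun t => -∫ x in (0 : ℝ)..(-t), φ x := by
      funext t
      exact intervalIntegral.integral_symm 0 (-t)
    rw [this]
    exact (h1.comp continuous_neg).neg
  -- key: the rescaled integral equals ∫ u in 0..τ, F (u / lam²)
  have key : ∀ lam : ℝ, lam ∈ Set.Ioi (0 : ℝ) →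
      -((lam ^ 2 : ℂ) *
          ∫ t₁ in (0 : ℝ)..(τ / lam ^ 2), ∫ t₂ in (0 : ℝ)..t₁, φ (t₂ - t₁)) =
      -∫ u in (0 : ℝ)..τ, F (u / lam ^ 2) := by
    intro lam hlam
    have hl2 : (lam : ℝ) ^ 2 ≠ 0 := pow_ne_zero 2 (ne_of_gt hlam)
    have hinner : ∀ t₁ : ℝ, (∫ t₂ in (0 : ℝ)..t₁, φ (t₂ - t₁)) = F t₁ := by
      intro t₁
      have := intervalIntegral.integral_comp_sub_right (a := (0:ℝ)) (b := t₁) φ t₁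
      simpa [F] using this
    have hsub : (∫ u in (0 : ℝ)..τ, F (u / lam ^ 2)) =
        (lam ^ 2 : ℝ) • ∫ t₁ in (0 : ℝ)..(τ / lam ^ 2), F t₁ := by
      have := intervalIntegral.integral_comp_div (a := (0:ℝ)) (b := τ) (f := F) hl2
      simpa using this
    rw [neg_inj]
    calc (lam ^ 2 : ℂ) * ∫ t₁ in (0 : ℝ)..(τ / lam ^ 2), ∫ t₂ in (0 : ℝ)..t₁, φ (t₂ - t₁)
        = (lam ^ 2 : ℂ) * ∫ t₁ in (0 : ℝ)..(τ / lam ^ 2), F t₁ := by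
          congr 1
          exact intervalIntegral.integral_congr fun t₁ _ => hinner t₁
      _ = (lam ^ 2 : ℝ) • ∫ t₁ in (0 : ℝ)..(τ / lam ^ 2), F t₁ := by
          rw [Complex.real_smul]; push_cast; ring_nf
      _ = ∫ u in (0 : ℝ)..τ, F (u / lam ^ 2) := hsub.symm
  -- dominated convergence
  have hmain : Tendsto (fun lam : ℝ => ∫ u in (0 : ℝ)..τ, F (u / lam ^ 2))
      (nhdsWithin 0 (Set.Ioi 0)) (nhds ((τ : ℂ) * L)) := by
    have hrw : ∀ lam : ℝ, (∫ u in (0 : ℝ)..τ, F (u / lam ^ 2)) =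
        ∫ u in Set.Ioc (0:ℝ) τ, F (u / lam ^ 2) := fun lam =>
      intervalIntegral.integral_of_le hτ.le
    have hlim : Tendsto (fun lam : ℝ => ∫ u in Set.Ioc (0:ℝ) τ, F (u / lam ^ 2))
        (nhdsWithin 0 (Set.Ioi 0)) (nhds ((τ : ℂ) * L)) := by
      have hconst : ((τ : ℂ) * L) = ∫ _ in Set.Ioc (0:ℝ) τ, L := by
        rw [setIntegral_const]
        simp [Real.volume_Ioc, hτ.le, Complex.real_smul]
      rw [hconst]
      refine tendsto_integral_filter_of_dominated_convergence
        (fun _ => ∫ x, ‖φ x‖) ?_ ?_ ?_ ?_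
      · filter_upwards with lam
        exact ((hFcont.comp (continuous_id.div_const _)).aestronglyMeasurable).restrict
      · filter_upwards [self_mem_nhdsWithin] with lam (hlam : 0 < lam)
        refine (ae_restrict_mem measurableSet_Ioc).mono fun u hu => ?_
        have hpos : (0:ℝ) ≤ u / lam ^ 2 :=
          div_nonneg hu.1.le (sq_nonneg lam)
        have h1 : ‖F (u / lam ^ 2)‖ ≤ ∫ x in (-(u / lam ^ 2))..(0:ℝ), ‖φ x‖ := by
          apply intervalIntegral.norm_integral_le_abs_integral_norm.trans
          rw [abs_of_nonneg]
          apply intervalIntegral.integral_nonneg (by linarith)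
          intro x _; exact norm_nonneg _
        refine h1.trans ?_
        rw [intervalIntegral.integral_of_le (by linarith)]
        refine setIntegral_le_integral hφ.norm ?_
        filter_upwards with x using norm_nonneg _
      · exact integrable_const _
      · refine (ae_restrict_mem measurableSet_Ioc).mono fun u hu => ?_
        have htop : Tendsto (fun lam : ℝ => u / lam ^ 2)
            (nhdsWithin 0 (Set.Ioi 0)) atTop := by
          have hsq : Tendsto (fun lam : ℝ => lam ^ 2)
              (nhdsWithin 0 (Set.Ioi 0)) (nhdsWithin 0 (Set.Ioi 0)) := by
            refine tendsto_nhdsWithin_iff.2 ⟨?_, ?_⟩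
            · have : Tendsto (fun lam : ℝ => lam ^ 2) (nhds 0) (nhds 0) := by
                simpa using (continuous_pow 2).tendsto (0:ℝ)
              exact this.mono_left nhdsWithin_le_nhds
            · filter_upwards [self_mem_nhdsWithin] with lam (hlam : 0 < lam)
              exact pow_pos hlam 2
          have hinv : Tendsto (fun lam : ℝ => (lam ^ 2)⁻¹)
              (nhdsWithin 0 (Set.Ioi 0)) atTop :=
            tendsto_inv_nhdsGT_zero.comp hsq
          have := hinv.const_mul_atTop hu.1
          simpa [div_eq_mul_inv] using this
        have hbot : Tendsto (fun lam : ℝ => -(u / lam ^ 2))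
            (nhdsWithin 0 (Set.Ioi 0)) atBot := tendsto_neg_atTop_atBot.comp htop
        exact MeasureTheory.intervalIntegral_tendsto_integral_Iic 0
          hφ.integrableOn hbot
    simpa only [hrw] using hlim
  refine Tendsto.congr' ?_ hmain.neg
  filter_upwards [self_mem_nhdsWithin] with lam hlam
  exact (key lam hlam).symm
end

section
/- A generalized Vandermonde matrix with distinct positive real nodes has linearly independent columns: if ξ_1, ..., ξ_N are distinct positive reals and k_1 < k_2 < ... < k_N are distinct natural numbers, then the N×N matrix V with entries V_{ij} = ξ_i^{k_j} is invertible. -/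
/-! A vector `v` in the kernel of `V` gives the polynomial `∑ j, v j X ^ k j`, which has at most
`N` nonzero coefficients and vanishes at the `N` distinct positive nodes `ξ i`. By Descartes' rule
of signs, a nonzero real polynomial has fewer positive roots than sign changes in its coefficient
sequence, hence fewer than nonzero coefficients; so `v = 0`. -/

open Finset Polynomial

namespace Polynomial

theorem signVariations_lt_card_support {R : Type*} [Semiring R] [LinearOrder R] {P : R[X]}
    (hP : P ≠ 0) : P.signVariations < #P.support := by
  induction hn : #P.support generalizing P with
  | zero => exact absurd (card_support_eq_zero.mp hn) hP
  | succ n ih =>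
    by_cases hE : P.eraseLead = 0
    · rw [← eraseLead_add_monomial_natDegree_leadingCoeff P, hE, zero_add,
        signVariations_monomial]
      exact n.succ_pos
    · have := ih hE (card_support_eraseLead' hn)
      have := signVariations_le_eraseLead_succ P
      omega

theorem roots_countP_pos_lt_card_support {R : Type*} [CommRing R] [LinearOrder R]
    [IsStrictOrderedRing R] {P : R[X]} (hP : P ≠ 0) :
    P.roots.countP (0 < ·) < #P.support :=
  (roots_countP_pos_le_signVariations P).trans_lt (signVariations_lt_card_support hP)

theorem card_le_roots_countP_pos {R ι : Type*} [CommRing R] [IsDomain R] [LinearOrder R]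
    [Fintype ι] {P : R[X]} (hP : P ≠ 0) {x : ι → R} (hx : Function.Injective x)
    (hpos : ∀ i, 0 < x i) (hroot : ∀ i, P.IsRoot (x i)) :
    Fintype.card ι ≤ P.roots.countP (0 < ·) := by
  have hle : univ.val.map x ≤ P.roots.filter (0 < ·) := by
    refine (Multiset.le_iff_subset (univ.nodup.map hx)).mpr fun y hy => ?_
    obtain ⟨i, -, rfl⟩ := Multiset.mem_map.mp hy
    exact Multiset.mem_filter.mpr ⟨(mem_roots hP).mpr (hroot i), hpos i⟩
  simpa [Multiset.countP_eq_card_filter] using Multiset.card_le_card hle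

section SumMonomial

variable {R ι : Type*} [Semiring R] [Fintype ι] {k : ι → ℕ}

theorem coeff_sum_monomial_of_injective (hk : Function.Injective k) (v : ι → R) (i : ι) :
    (∑ j, monomial (k j) (v j)).coeff (k i) = v i := by
  classical
  simp [finsetSum_coeff, coeff_monomial, hk.eq_iff]

theorem sum_monomial_ne_zero (hk : Function.Injective k) {v : ι → R} (hv : v ≠ 0) :
    ∑ j, monomial (k j) (v j) ≠ 0 := by
  obtain ⟨i, hi⟩ := Function.ne_iff.mp hv
  intro h
  simpa [h] using (coeff_sum_monomial_of_injective hk v i).trans_ne hi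

theorem card_support_sum_monomial_le (k : ι → ℕ) (v : ι → R) :
    #(∑ j, monomial (k j) (v j)).support ≤ Fintype.card ι := by
  have hsub : (∑ j, monomial (k j) (v j)).support ⊆ univ.image k := fun n hn => by
    contrapose! hn
    simp_all [coeff_monomial]
  exact (card_le_card hsub).trans card_image_le

end SumMonomial

end Polynomial

/-- A generalized Vandermonde matrix with distinct positive real nodes `ξ_i` and strictly
increasing natural exponents `k_j` has nonzero determinant (linearly independent columns). -/
theorem generalized_vandermonde_det_ne_zero
    (N : ℕ) (ξ : Fin N → ℝ) (hpos : ∀ i, 0 < ξ i) (hinj : Function.Injective ξ)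
    (k : Fin N → ℕ) (hk : StrictMono k) :
    (Matrix.of fun i j : Fin N => ξ i ^ k j).det ≠ 0 := by
  intro hdet
  obtain ⟨v, hv, hVv⟩ := Matrix.exists_mulVec_eq_zero_iff.mpr hdet
  set P : ℝ[X] := ∑ j, monomial (k j) (v j)
  have hP : P ≠ 0 := sum_monomial_ne_zero hk.injective hv
  have hroot (i : Fin N) : P.IsRoot (ξ i) := by
    simpa [P, eval_finsetSum, Matrix.mulVec, dotProduct, mul_comm] using congrFun hVv i
  have hroots : N ≤ P.roots.countP (0 < ·) := by
    simpa using card_le_roots_countP_pos hP hinj hpos hroot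
  have hsupp : #P.support ≤ N := by simpa using card_support_sum_monomial_le k v
  have := roots_countP_pos_lt_card_support hP
  omega
end
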